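/- arXiv:math/0612258 — 3 statements merged into one kernel-verified Lean document; each statement's English description precedes it below -/
import Mathlib

section
/- Let μ be a σ-finite measure on E and let p, r : E × Θ → (0,∞) be densities with θ ↦ p(x,θ) and θ ↦ r(x,θ) differentiable in θ for μ-almost all x, with partial derivatives p', r'. Set s = p + r. Then ∫ s'(x,θ)²/s(x,θ) dμ(x) ≤ ∫ p'(x,θ)²/p(x,θ) dμ(x) + ∫ r'(x,θ)²/r(x,θ) dμ(x). -/
open MeasureTheory

lemma add_sq_div_add_le {a b P R : ℝ} (hP : 0 < P) (hR : 0 < R) :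
    (a + b) ^ 2 / (P + R) ≤ a ^ 2 / P + b ^ 2 / R := by
  simpa [Fin.sum_univ_two] using
    Finset.sq_sum_div_le_sum_sq_div Finset.univ ![a, b] (g := ![P, R])
      (by simp [Fin.forall_fin_two, hP, hR])

theorem stmt0_general {E : Type*} [MeasurableSpace E] (μ : Measure E)
    (p r p' r' : E → ℝ → ℝ) (θ : ℝ)
    (hp : ∀ᵐ x ∂μ, 0 < p x θ ∧ HasDerivAt (p x) (p' x θ) θ)
    (hr : ∀ᵐ x ∂μ, 0 < r x θ ∧ HasDerivAt (r x) (r' x θ) θ)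
    (hip : Integrable (fun x => (p' x θ) ^ 2 / p x θ) μ)
    (hir : Integrable (fun x => (r' x θ) ^ 2 / r x θ) μ) :
    ∫ x, (p' x θ + r' x θ) ^ 2 / (p x θ + r x θ) ∂μ
      ≤ (∫ x, (p' x θ) ^ 2 / p x θ ∂μ) + ∫ x, (r' x θ) ^ 2 / r x θ ∂μ := by
  rw [← integral_add hip hir]
  -- The left integrand need not be integrable; if not, its integral is `0` and nonnegativity suffices.
  refine integral_mono_of_nonneg ?_ (hip.add hir) ?_
  · filter_upwards [hp, hr] with x ⟨hpx, _⟩ ⟨hrx, _⟩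
    positivity
  · filter_upwards [hp, hr] with x ⟨hpx, _⟩ ⟨hrx, _⟩
    exact add_sq_div_add_le hpx hrx

/-- Subadditivity of Fisher information under mixture of densities. -/
theorem stmt0 {E : Type*} [MeasurableSpace E] (μ : Measure E) [SigmaFinite μ]
    (p r p' r' : E → ℝ → ℝ) (θ : ℝ)
    (hp : ∀ᵐ x ∂μ, 0 < p x θ ∧ HasDerivAt (p x) (p' x θ) θ)
    (hr : ∀ᵐ x ∂μ, 0 < r x θ ∧ HasDerivAt (r x) (r' x θ) θ)
    (hip : Integrable (fun x => (p' x θ) ^ 2 / p x θ) μ)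
    (hir : Integrable (fun x => (r' x θ) ^ 2 / r x θ) μ) :
    ∫ x, (p' x θ + r' x θ) ^ 2 / (p x θ + r x θ) ∂μ
      ≤ (∫ x, (p' x θ) ^ 2 / p x θ ∂μ) + ∫ x, (r' x θ) ^ 2 / r x θ ∂μ :=
  stmt0_general μ p r p' r' θ hp hr hip hir
end

section
/- Let (Ω, 𝒜, ℙ) be a probability space, V a random variable with values in Θ ⊆ ℝ, T a real random variable, and ψ : Θ → ℝ measurable. Suppose the conditional second moment bound E[(T − ψ(θ))² | V = θ] ≥ ψ'(θ)²/J(θ) holds for ρ-almost every θ (ρ the law of V), where J : Θ → (0,∞). Then for ψ_*ρ-almost every a, E[(T − a)² | ψ(V) = a] ≥ E_ρ[ψ'²/J | ψ = a]. -/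
open MeasureTheory

theorem condExp_le_condExp_of_le_condExp {Ω : Type*} {m' m m₀ : MeasurableSpace Ω}
    {μ : Measure Ω} (hm'm : m' ≤ m) (hm : m ≤ m₀) [SigmaFinite (μ.trim hm)]
    {f g : Ω → ℝ} (hf : Integrable f μ) (hfg : f ≤ᵐ[μ] μ[g | m]) :
    μ[f | m'] ≤ᵐ[μ] μ[g | m'] := by
  filter_upwards [condExp_mono hf integrable_condExp hfg,
    condExp_condExp_of_le (f := g) hm'm hm] with ω hmono htower
  exact htower ▸ hmono

theorem stmt8_general {Ω : Type*} [MeasurableSpace Ω] (μ : Measure Ω) [IsProbabilityMeasure μ]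
    (V T : Ω → ℝ) (hV : Measurable V)
    (ψ J : ℝ → ℝ) (hψ : Measurable ψ)
    (hint2 : Integrable (fun ω => (deriv ψ (V ω)) ^ 2 / J (V ω)) μ)
    (hCR : ∀ᵐ ω ∂μ,
      (deriv ψ (V ω)) ^ 2 / J (V ω)
        ≤ (μ[(fun ω' => (T ω' - ψ (V ω')) ^ 2) |
            MeasurableSpace.comap V Real.measurableSpace]) ω) :
    ∀ᵐ ω ∂μ,
      (μ[(fun ω' => (deriv ψ (V ω')) ^ 2 / J (V ω')) |
          MeasurableSpace.comap (fun ω' => ψ (V ω')) Real.measurableSpace]) ω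
        ≤ (μ[(fun ω' => (T ω' - ψ (V ω')) ^ 2) |
            MeasurableSpace.comap (fun ω' => ψ (V ω')) Real.measurableSpace]) ω :=
  condExp_le_condExp_of_le_condExp (hψ.comp (comap_measurable V)).comap_le hV.comap_le hint2 hCR

/-- Conditioning the Cramér–Rao bound with respect to ψ(V): the conditional quadratic
risk given ψ(V) dominates the conditional expectation of ψ'²/J given ψ(V). -/
theorem stmt8 {Ω : Type*} [MeasurableSpace Ω] (μ : Measure Ω) [IsProbabilityMeasure μ]
    (V T : Ω → ℝ) (hV : Measurable V) (hT : Measurable T)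
    (ψ J : ℝ → ℝ) (hψ : Measurable ψ) (hJ : ∀ θ, 0 < J θ)
    (hint : Integrable (fun ω => (T ω - ψ (V ω)) ^ 2) μ)
    (hint2 : Integrable (fun ω => (deriv ψ (V ω)) ^ 2 / J (V ω)) μ)
    (hCR : ∀ᵐ ω ∂μ,
      (deriv ψ (V ω)) ^ 2 / J (V ω)
        ≤ (μ[(fun ω' => (T ω' - ψ (V ω')) ^ 2) |
            MeasurableSpace.comap V Real.measurableSpace]) ω) :
    ∀ᵐ ω ∂μ,
      (μ[(fun ω' => (deriv ψ (V ω')) ^ 2 / J (V ω')) |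
          MeasurableSpace.comap (fun ω' => ψ (V ω')) Real.measurableSpace]) ω
        ≤ (μ[(fun ω' => (T ω' - ψ (V ω')) ^ 2) |
            MeasurableSpace.comap (fun ω' => ψ (V ω')) Real.measurableSpace]) ω :=
  stmt8_general μ V T hV ψ J hψ hint2 hCR
end

section
/- Let Θ = (−1,1)\{0}, ψ(θ) = θ², and for a ∈ (0,1) define the mixture density h(x,a) = ½(φ(x−√a) + φ(x+√a)) where φ is the standard Gaussian density. Let J^ψ(a) = ∫ (∂_a h(x,a))²/h(x,a) dx. Then 1/J^ψ(a) > 4a for all a ∈ (0,1). -/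
open MeasureTheory Real

lemma aux_int_exp : ∫ x : ℝ, Real.exp (-(x ^ 2) / 2) = Real.sqrt (2 * Real.pi) := by
  have h := integral_gaussian (1/2 : ℝ)
  have : ∀ x : ℝ, Real.exp (-(1/2 : ℝ) * x ^ 2) = Real.exp (-(x ^ 2) / 2) := by
    intro x; ring_nf
  rw [show (fun x : ℝ => Real.exp (-(1/2 : ℝ) * x ^ 2)) = fun x : ℝ => Real.exp (-(x ^ 2) / 2)
    from funext this] at h
  rw [h]; rw [show Real.pi/(1/2) = 2*Real.pi by ring]

lemma aux_integrable_exp : Integrable fun x : ℝ => Real.exp (-(x ^ 2) / 2) := by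
  have h := integrable_exp_neg_mul_sq (b := 1/2) (by norm_num)
  convert h using 2 with x; ring_nf

lemma aux_integrable_sq : Integrable fun x : ℝ => x ^ 2 * Real.exp (-(x ^ 2) / 2) := by
  have h := integrable_rpow_mul_exp_neg_mul_sq (b := 1/2) (by norm_num) (s := 2) (by norm_num)
  convert h using 2 with x
  rw [show ((2:ℝ) = ((2:ℕ):ℝ)) by norm_num, Real.rpow_natCast]
  ring_nf

lemma aux_int_sq : ∫ x : ℝ, x ^ 2 * Real.exp (-(x ^ 2) / 2) = Real.sqrt (2 * Real.pi) := by
  have hderiv : ∀ x : ℝ, HasDerivAt (fun x : ℝ => -x * Real.exp (-(x ^ 2) / 2))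
      ((x ^ 2 - 1) * Real.exp (-(x ^ 2) / 2)) x := by
    intro x
    have h1 : HasDerivAt (fun x : ℝ => -(x ^ 2) / 2) (-x) x := by
      have := ((hasDerivAt_pow 2 x).neg.div_const 2)
      exact this.congr_deriv (by push_cast; ring)
    have h2 : HasDerivAt (fun x : ℝ => Real.exp (-(x ^ 2) / 2))
        (Real.exp (-(x ^ 2) / 2) * (-x)) x := h1.exp
    have h3 : HasDerivAt (fun x : ℝ => -x) (-1 : ℝ) x := (hasDerivAt_id x).neg
    have := h3.mul h2
    exact this.congr_deriv (by ring)
  have hint' : Integrable fun x : ℝ => (x ^ 2 - 1) * Real.exp (-(x ^ 2) / 2) := by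
    have := aux_integrable_sq.sub aux_integrable_exp
    convert this using 1 with x; ext x; simp; ring
  have hintf : Integrable fun x : ℝ => -x * Real.exp (-(x ^ 2) / 2) := by
    have h := (integrable_mul_exp_neg_mul_sq (b := 1/2) (by norm_num)).neg
    convert h using 1 with x; ext x; simp; ring_nf; tauto
  have h0 := integral_eq_zero_of_hasDerivAt_of_integrable hderiv hint' hintf
  have hsub : ∫ x : ℝ, (x ^ 2 - 1) * Real.exp (-(x ^ 2) / 2)
      = (∫ x : ℝ, x ^ 2 * Real.exp (-(x ^ 2) / 2)) - ∫ x : ℝ, Real.exp (-(x ^ 2) / 2) := by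
    rw [← integral_sub aux_integrable_sq aux_integrable_exp]
    congr 1 with x; ring
  rw [hsub] at h0
  rw [aux_int_exp] at h0
  linarith


noncomputable def gaussFn (x : ℝ) : ℝ := (Real.sqrt (2 * Real.pi))⁻¹ * Real.exp (-(x ^ 2) / 2)
lemma sqrt2pi_pos : 0 < Real.sqrt (2 * Real.pi) := Real.sqrt_pos.2 (by positivity)

lemma gaussFn_integrable' : Integrable gaussFn :=
  aux_integrable_exp.const_mul _

lemma gaussFn_int' : ∫ x : ℝ, gaussFn x = 1 := by
  unfold gaussFn
  rw [integral_const_mul, aux_int_exp, inv_mul_cancel₀ (ne_of_gt sqrt2pi_pos)]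

lemma gaussFn_sq_integrable' : Integrable fun x : ℝ => x ^ 2 * gaussFn x := by
  have := aux_integrable_sq.const_mul ((Real.sqrt (2 * Real.pi))⁻¹)
  convert this using 2 with x
  unfold gaussFn; ring

lemma gaussFn_sq_int' : ∫ x : ℝ, x ^ 2 * gaussFn x = 1 := by
  have : ∀ x : ℝ, x ^ 2 * gaussFn x
      = (Real.sqrt (2 * Real.pi))⁻¹ * (x ^ 2 * Real.exp (-(x ^ 2) / 2)) := by
    intro x; unfold gaussFn; ring
  rw [funext this]
  rw [integral_const_mul, aux_int_sq, inv_mul_cancel₀ (ne_of_gt sqrt2pi_pos)]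

lemma gaussFn_pos (x : ℝ) : 0 < gaussFn x := by
  unfold gaussFn
  have := sqrt2pi_pos
  positivity

@[fun_prop] lemma gaussFn_cont : Continuous gaussFn := by
  unfold gaussFn; fun_prop



lemma hasDeriv_gaussFn (u : ℝ) : HasDerivAt gaussFn (-u * gaussFn u) u := by
  have h1 : HasDerivAt (fun u : ℝ => -(u ^ 2) / 2) (-u) u := by
    have := ((hasDerivAt_pow 2 u).neg.div_const 2)
    exact this.congr_deriv (by push_cast; ring)
  have h3 := h1.exp.const_mul ((Real.sqrt (2 * Real.pi))⁻¹)
  exact h3.congr_deriv (by unfold gaussFn; ring)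

lemma hasDeriv_mix (x : ℝ) {a : ℝ} (ha : 0 < a) :
    HasDerivAt (fun b => (gaussFn (x - Real.sqrt b) + gaussFn (x + Real.sqrt b)) / 2)
      (((x - Real.sqrt a) * gaussFn (x - Real.sqrt a)
        - (x + Real.sqrt a) * gaussFn (x + Real.sqrt a)) / (4 * Real.sqrt a)) a := by
  set s := Real.sqrt a with hs_def
  have hs : 0 < s := Real.sqrt_pos.2 ha
  have hsq : HasDerivAt Real.sqrt (1 / (2 * s)) a := Real.hasDerivAt_sqrt (ne_of_gt ha)
  have d1 : HasDerivAt (fun b => x - Real.sqrt b) (-(1 / (2 * s))) a := by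
    exact ((hasDerivAt_const a x).sub hsq).congr_deriv (by ring)
  have d2 : HasDerivAt (fun b => x + Real.sqrt b) (1 / (2 * s)) a := by
    exact ((hasDerivAt_const a x).add hsq).congr_deriv (by ring)
  have c1 : HasDerivAt (fun b => gaussFn (x - Real.sqrt b))
      ((-(x - s) * gaussFn (x - s)) * (-(1 / (2 * s)))) a :=
    HasDerivAt.comp (h₂ := gaussFn) a (hasDeriv_gaussFn (x - s)) d1
  have c2 : HasDerivAt (fun b => gaussFn (x + Real.sqrt b))
      ((-(x + s) * gaussFn (x + s)) * (1 / (2 * s))) a :=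
    HasDerivAt.comp (h₂ := gaussFn) a (hasDeriv_gaussFn (x + s)) d2
  have := (c1.add c2).div_const 2
  refine this.congr_deriv ?_
  field_simp
  ring

lemma key_diff (x s g1 g2 : ℝ) (hs : 0 < s) (h1 : 0 < g1) (h2 : 0 < g2) :
    ((x - s) ^ 2 * g1 + (x + s) ^ 2 * g2) / (8 * s ^ 2)
      - (((x - s) * g1 - (x + s) * g2) / (4 * s)) ^ 2 / ((g1 + g2) / 2)
      = g1 * g2 * (2 * x) ^ 2 / ((g1 + g2) * (8 * s ^ 2)) := by
  field_simp
  ring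

lemma pos_integral {f : ℝ → ℝ} (hc : Continuous f) (hnn : ∀ x, 0 ≤ f x)
    (hi : Integrable f) {x₀ : ℝ} (hx : 0 < f x₀) : 0 < ∫ x, f x := by
  rw [integral_pos_iff_support_of_nonneg hnn hi]
  have hopen : IsOpen (Function.support f) := by
    have hset : Function.support f = f ⁻¹' Set.Ioi 0 := by
      ext y
      simp only [Function.mem_support, Set.mem_preimage, Set.mem_Ioi]
      exact ⟨fun h => lt_of_le_of_ne (hnn y) (Ne.symm h), fun h => ne_of_gt h⟩
    rw [hset]; exact isOpen_Ioi.preimage hc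
  exact hopen.measure_pos volume ⟨x₀, by simp [Function.mem_support]; exact ne_of_gt hx⟩
/-- For the Gaussian mixture model obtained by conditioning N(θ,1) on θ² = a, the inverse
Fisher information strictly exceeds the error-calculus bound 4a. -/
theorem stmt14 (gauss : ℝ → ℝ)
    (hgauss : gauss = fun x => (Real.sqrt (2 * Real.pi))⁻¹ * Real.exp (-(x ^ 2) / 2))
    (h : ℝ → ℝ → ℝ)
    (hh : h = fun x a => (gauss (x - Real.sqrt a) + gauss (x + Real.sqrt a)) / 2)
    (Jψ : ℝ → ℝ)
    (hJψ : Jψ = fun a => ∫ x : ℝ, (deriv (fun b => h x b) a) ^ 2 / h x a) :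
    ∀ a ∈ Set.Ioo (0 : ℝ) 1, 4 * a < 1 / Jψ a := by
  obtain rfl : gauss = gaussFn := hgauss
  subst hh hJψ
  rintro a ⟨ha0, _⟩
  set s := Real.sqrt a with hs_def
  have hs : 0 < s := Real.sqrt_pos.2 ha0
  have hsa : s ^ 2 = a := Real.sq_sqrt ha0.le
  -- the explicit derivative and integrands
  set q : ℝ → ℝ := fun x =>
    (((x - s) * gaussFn (x - s) - (x + s) * gaussFn (x + s)) / (4 * s)) ^ 2
      / ((gaussFn (x - s) + gaussFn (x + s)) / 2) with hq_def
  set f : ℝ → ℝ := fun x =>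
    ((x - s) ^ 2 * gaussFn (x - s) + (x + s) ^ 2 * gaussFn (x + s)) / (8 * s ^ 2) with hf_def
  -- pointwise facts
  have hden_pos : ∀ x : ℝ, 0 < (gaussFn (x - s) + gaussFn (x + s)) / 2 := fun x => by
    have := gaussFn_pos (x - s); have := gaussFn_pos (x + s); linarith
  have hq_nonneg : ∀ x, 0 ≤ q x := fun x => by
    have := hden_pos x
    positivity
  have hdiff_eq : ∀ x, f x - q x
      = gaussFn (x - s) * gaussFn (x + s) * (2 * x) ^ 2
          / ((gaussFn (x - s) + gaussFn (x + s)) * (8 * s ^ 2)) := fun x =>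
    key_diff x s _ _ hs (gaussFn_pos _) (gaussFn_pos _)
  have hdiff_nonneg : ∀ x, 0 ≤ f x - q x := fun x => by
    rw [hdiff_eq x]
    have := gaussFn_pos (x - s); have := gaussFn_pos (x + s)
    positivity
  have hq_le_f : ∀ x, q x ≤ f x := fun x => by linarith [hdiff_nonneg x]
  -- continuity
  have hden_cont : Continuous fun x : ℝ => (gaussFn (x - s) + gaussFn (x + s)) / 2 := by
    apply Continuous.div_const; fun_prop
  have hq_cont : Continuous q := by
    apply Continuous.div _ hden_cont (fun x => ne_of_gt (hden_pos x))
    apply Continuous.pow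
    apply Continuous.div_const
    fun_prop
  -- integrability of f and its integral
  have hint1 : Integrable fun x : ℝ => (x - s) ^ 2 * gaussFn (x - s) :=
    gaussFn_sq_integrable'.comp_sub_right s
  have hint2 : Integrable fun x : ℝ => (x + s) ^ 2 * gaussFn (x + s) :=
    gaussFn_sq_integrable'.comp_add_right s
  have hf_int : Integrable f := ((hint1.add hint2).div_const _)
  have hf_val : ∫ x, f x = 1 / (4 * a) := by
    have e1 : ∫ x : ℝ, (x - s) ^ 2 * gaussFn (x - s) = 1 := by
      rw [integral_sub_right_eq_self (fun y : ℝ => y ^ 2 * gaussFn y) s]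
      exact gaussFn_sq_int'
    have e2 : ∫ x : ℝ, (x + s) ^ 2 * gaussFn (x + s) = 1 := by
      rw [integral_add_right_eq_self (fun y : ℝ => y ^ 2 * gaussFn y) s]
      exact gaussFn_sq_int'
    have : ∫ x, f x = (∫ x : ℝ, ((x - s) ^ 2 * gaussFn (x - s) + (x + s) ^ 2 * gaussFn (x + s)))
        / (8 * s ^ 2) := by
      rw [← integral_div]
    rw [this, integral_add hint1 hint2, e1, e2, hsa]
    field_simp
    ring
  -- integrability of q
  have hq_int : Integrable q := by
    refine Integrable.mono' hf_int hq_cont.aestronglyMeasurable ?_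
    filter_upwards with x
    rw [Real.norm_eq_abs, abs_of_nonneg (hq_nonneg x)]
    exact hq_le_f x
  -- strict inequality of integrals
  have hlt : ∫ x, q x < ∫ x, f x := by
    have hpos : 0 < ∫ x, (f x - q x) := by
      apply pos_integral (f := fun x => f x - q x)
      · have hf_cont : Continuous f := by
          apply Continuous.div_const; fun_prop
        exact hf_cont.sub hq_cont
      · exact hdiff_nonneg
      · exact hf_int.sub hq_int
      · show (0:ℝ) < f 1 - q 1
        rw [hdiff_eq 1]
        have := gaussFn_pos (1 - s); have := gaussFn_pos (1 + s)
        positivity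
    have := integral_sub hf_int hq_int
    rw [this] at hpos
    linarith
  -- positivity of ∫ q
  have hJ_pos : 0 < ∫ x, q x := by
    apply pos_integral hq_cont hq_nonneg hq_int (x₀ := 0)
    have h1 := gaussFn_pos (0 - s); have h2 := gaussFn_pos (0 + s)
    have hnum : (0 - s) * gaussFn (0 - s) - (0 + s) * gaussFn (0 + s) < 0 := by nlinarith
    have hden := hden_pos 0
    have hne : ((0 - s) * gaussFn (0 - s) - (0 + s) * gaussFn (0 + s)) / (4 * s) ≠ 0 := by
      apply div_ne_zero (ne_of_lt hnum); positivity
    show (0:ℝ) < _ / _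
    positivity
  -- conclude
  have hJval : (∫ x : ℝ, (deriv (fun b => (gaussFn (x - Real.sqrt b) + gaussFn (x + Real.sqrt b)) / 2) a) ^ 2
      / ((gaussFn (x - Real.sqrt a) + gaussFn (x + Real.sqrt a)) / 2)) = ∫ x : ℝ, q x := by
    congr 1
    funext x
    rw [(hasDeriv_mix x ha0).deriv]
  show 4 * a < 1 / ∫ x : ℝ, (deriv (fun b => (gaussFn (x - Real.sqrt b) + gaussFn (x + Real.sqrt b)) / 2) a) ^ 2
      / ((gaussFn (x - Real.sqrt a) + gaussFn (x + Real.sqrt a)) / 2)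
  rw [hJval]
  have hqlt : ∫ x, q x < 1 / (4 * a) := by rw [← hf_val]; exact hlt
  have hfin := one_div_lt_one_div_of_lt hJ_pos hqlt
  rwa [one_div_one_div] at hfin
end
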